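/- arXiv:2107.10024 — 7 statements merged into one kernel-verified Lean document; each statement's English description precedes it below -/
import Mathlib

section
/- Let d ≥ 1, λ < 0, ω > 0, and let k > 0 satisfy k² + 2λk + ω² = 0 (in particular this holds for k = k₊ = −λ + √(λ²−ω²) and k = k₋ = −λ − √(λ²−ω²) whenever −λ ≥ ω). Then the Gaussian φ_k(x) = e^{−dk/(4λ)} e^{−k|x|²/2} is a positive smooth function on ℝ^d satisfying pointwise the stationary equation −(1/2)Δφ_k(x) − ω²(|x|²/2)φ_k(x) + λ φ_k(x) ln(φ_k(x)²) = 0 for all x ∈ ℝ^d. -/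
/-- The Laplacian of a real-valued function on `ℝ^d`, as the sum of second partial
derivatives in the coordinate directions. -/
noncomputable def rlap {d : ℕ} (f : EuclideanSpace ℝ (Fin d) → ℝ)
    (x : EuclideanSpace ℝ (Fin d)) : ℝ :=
  ∑ i : Fin d, iteratedFDeriv ℝ 2 f x ![EuclideanSpace.single i 1, EuclideanSpace.single i 1]

section aux

variable {d : ℕ}

local notation "E" => EuclideanSpace ℝ (Fin d)

lemma gausson_hasFDerivAt (C k : ℝ) (x : E) :
    HasFDerivAt (fun y : E => C * Real.exp (-k * ‖y‖ ^ 2 / 2))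
      ((-k * (C * Real.exp (-k * ‖x‖ ^ 2 / 2))) • innerSL ℝ x) x := by
  have hfun : (fun y : E => C * Real.exp (-k * ‖y‖ ^ 2 / 2))
      = fun y : E => C * Real.exp (-k / 2 * ‖y‖ ^ 2) := by
    funext y; ring_nf
  rw [hfun]
  have h1 : HasFDerivAt (fun y : E => ‖y‖ ^ 2) (2 • innerSL ℝ x) x :=
    (hasStrictFDerivAt_norm_sq x).hasFDerivAt
  have h2 := ((h1.const_mul (-k / 2)).exp).const_mul C
  refine h2.congr_fderiv ?_
  ext y
  simp only [ContinuousLinearMap.smul_apply, smul_eq_mul]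
  ring_nf

end aux

/-- For `λ < 0`, `ω > 0` and `k > 0` a root of `k² + 2λk + ω² = 0`, the Gausson
`φ_k(x) = e^{−dk/(4λ)} e^{−k|x|²/2}` is a positive smooth function solving pointwise
`−(1/2)Δφ − ω²(|x|²/2)φ + λ φ ln(φ²) = 0`. -/
theorem gausson_is_positive_smooth_stationary_solution
    (d : ℕ) (hd : 1 ≤ d) (lam ω k : ℝ) (hlam : lam < 0) (hω : 0 < ω)
    (hk : 0 < k) (hroot : k ^ 2 + 2 * lam * k + ω ^ 2 = 0)
    (φ : EuclideanSpace ℝ (Fin d) → ℝ)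
    (hφ : ∀ x, φ x = Real.exp (-(d * k) / (4 * lam)) * Real.exp (-k * ‖x‖ ^ 2 / 2)) :
    ContDiff ℝ (⊤ : ℕ∞) φ ∧ (∀ x, 0 < φ x) ∧
      ∀ x, -(1 / 2) * rlap φ x - ω ^ 2 * (‖x‖ ^ 2 / 2) * φ x
          + lam * φ x * Real.log (φ x ^ 2) = 0 := by
  set C : ℝ := Real.exp (-(d * k) / (4 * lam)) with hC
  have hφ' : φ = fun y => C * Real.exp (-k * ‖y‖ ^ 2 / 2) := funext hφ
  have hCpos : 0 < C := Real.exp_pos _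
  have hpos : ∀ x, 0 < φ x := fun x => (hφ x) ▸ mul_pos hCpos (Real.exp_pos _)
  have hsmooth : ContDiff ℝ (⊤ : ℕ∞) φ := by
    rw [hφ']
    exact contDiff_const.mul
      (((contDiff_const.mul (contDiff_norm_sq ℝ)).div_const 2).exp)
  refine ⟨hsmooth, hpos, fun x => ?_⟩
  have hd1 : ∀ y, HasFDerivAt φ ((-k * φ y) • innerSL ℝ y) y := by
    intro y
    rw [hφ y, hφ']
    exact gausson_hasFDerivAt C k y
  have hfd : ∀ y, fderiv ℝ φ y = (-k * φ y) • innerSL ℝ y := fun y => (hd1 y).fderiv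
  have hΦdiff : Differentiable ℝ (fderiv ℝ φ) :=
    (hsmooth.fderiv_right (m := 1) (WithTop.coe_le_coe.mpr le_top)).differentiable one_ne_zero
  -- Laplacian computation
  have hlap : rlap φ x = φ x * (k ^ 2 * ‖x‖ ^ 2 - k * d) := by
    have hsingle : ∀ i : Fin d,
        iteratedFDeriv ℝ 2 φ x ![EuclideanSpace.single i 1, EuclideanSpace.single i 1]
          = -k * φ x + k ^ 2 * φ x * (x i) ^ 2 := by
      intro i
      set e : EuclideanSpace ℝ (Fin d) := EuclideanSpace.single i 1 with he
      have happ : (fun y => fderiv ℝ φ y e) = fun y => (-k * φ y) * (innerSL ℝ e) y := by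
        funext y
        rw [hfd y]
        simp only [ContinuousLinearMap.smul_apply, smul_eq_mul, innerSL_apply_apply]
        rw [real_inner_comm]
      have hd2 : HasFDerivAt (fun y => (-k * φ y) * (innerSL ℝ e) y)
          (((-k * φ x) • (innerSL ℝ e)) +
            ((innerSL ℝ e) x) • ((-k) • ((-k * φ x) • innerSL ℝ x))) x := by
        have hc : HasFDerivAt (fun y => -k * φ y) ((-k) • ((-k * φ x) • innerSL ℝ x)) x :=
          (hd1 x).const_mul (-k)
        exact hc.mul ((innerSL ℝ e).hasFDerivAt)
      have hclm : fderiv ℝ (fun y => fderiv ℝ φ y e) x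
          = (fderiv ℝ φ x).comp (fderiv ℝ (fun _ => e) x)
            + (fderiv ℝ (fderiv ℝ φ) x).flip e :=
        fderiv_clm_apply (hΦdiff x) (differentiableAt_const e)
      have hkey : fderiv ℝ (fderiv ℝ φ) x e e
          = fderiv ℝ (fun y => fderiv ℝ φ y e) x e := by
        rw [hclm, fderiv_fun_const]
        simp
      rw [iteratedFDeriv_two_apply]
      simp only [Matrix.cons_val_zero, Matrix.cons_val_one, Matrix.head_cons, ← he]
      rw [hkey, happ, hd2.fderiv]
      have h1 : (innerSL ℝ e) x = x i := by
        rw [he]; simp [EuclideanSpace.inner_single_left]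
      have h2 : (innerSL ℝ x) e = x i := by
        rw [he]; simp [EuclideanSpace.inner_single_right]
      have h3 : (innerSL ℝ e) e = 1 := by
        rw [he]; simp [EuclideanSpace.inner_single_left]
      simp only [ContinuousLinearMap.add_apply, ContinuousLinearMap.smul_apply,
        smul_eq_mul, h1, h2, h3]
      ring
    have hnorm : ‖x‖ ^ 2 = ∑ i : Fin d, (x i) ^ 2 := by
      rw [EuclideanSpace.norm_sq_eq]
      simp [sq]
    rw [rlap, Finset.sum_congr rfl fun i _ => hsingle i, Finset.sum_add_distrib,
      Finset.sum_const, ← Finset.mul_sum, ← hnorm]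
    simp only [Finset.card_univ, Fintype.card_fin, nsmul_eq_mul]
    ring
  -- logarithm computation
  have hlog : Real.log (φ x ^ 2) = 2 * (-(d * k) / (4 * lam) + -k * ‖x‖ ^ 2 / 2) := by
    have hx2 : φ x ^ 2 = Real.exp (2 * (-(d * k) / (4 * lam) + -k * ‖x‖ ^ 2 / 2)) := by
      rw [hφ x, hC, ← Real.exp_add, sq, ← Real.exp_add]
      congr 1
      ring
    rw [hx2, Real.log_exp]
  rw [hlap, hlog]
  have hlamne : lam ≠ 0 := ne_of_lt hlam
  have h1 : lam * (2 * (-(↑d * k) / (4 * lam))) = -(↑d * k) / 2 := by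
    field_simp; ring
  have key : -(1 / 2) * (k ^ 2 * ‖x‖ ^ 2 - k * (d : ℝ)) - ω ^ 2 * (‖x‖ ^ 2 / 2)
      + lam * (2 * (-(↑d * k) / (4 * lam) + -k * ‖x‖ ^ 2 / 2)) = 0 := by
    linear_combination h1 - (‖x‖ ^ 2 / 2) * hroot
  linear_combination (φ x) * key
end

section
/- Let d ≥ 1, λ < 0, ω > 0, ν ∈ ℝ, and let k > 0 satisfy k² + 2λk + ω² = 0. Then the function u(t,x) = e^{−ν/(2λ)} e^{−dk/(4λ)} e^{−k|x|²/2} e^{iνt} satisfies pointwise the equation i∂ₜu + (1/2)Δu = −ω²(|x|²/2)u + λ u ln(|u|²) for all (t,x) ∈ ℝ×ℝ^d. In particular each stationary Gausson φ_k generates a continuous family of solitary waves indexed by ν ∈ ℝ. -/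
/-! Writing `u t = e^{-k|x|²/2} • A(t)`, the Laplacian of the Gaussian is `(k²|x|² - dk)` times
itself, `∂ₜu = iνu`, and `λ ln |u|² = -ν - dk/2 - λk|x|²` is quadratic in `x`. The constant terms
cancel because of the amplitude `e^{-ν/(2λ)} e^{-dk/(4λ)}`, and the coefficients of `|x|²` agree
exactly when `k² + 2λk + ω² = 0`. -/

/-- The Laplacian of a complex-valued function on `ℝ^d`, as the sum of second partial
derivatives in the coordinate directions. -/
noncomputable def clap {d : ℕ} (f : EuclideanSpace ℝ (Fin d) → ℂ)
    (x : EuclideanSpace ℝ (Fin d)) : ℂ :=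
  ∑ i : Fin d, iteratedFDeriv ℝ 2 f x ![EuclideanSpace.single i 1, EuclideanSpace.single i 1]

open scoped RealInnerProductSpace

section Gaussian

variable {E : Type*} [NormedAddCommGroup E] [InnerProductSpace ℝ E]

noncomputable def gaussian (k : ℝ) (x : E) : ℝ := Real.exp (-k * ‖x‖ ^ 2 / 2)

theorem contDiff_gaussian (k : ℝ) : ContDiff ℝ 2 (gaussian (E := E) k) :=
  ((contDiff_const.mul (contDiff_norm_sq ℝ)).div_const 2).exp

theorem hasFDerivAt_gaussian (k : ℝ) (x : E) :
    HasFDerivAt (gaussian k) ((-k * gaussian k x) • innerSL ℝ x) x := by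
  have hsq := ((hasStrictFDerivAt_norm_sq x).hasFDerivAt.const_mul (-k / 2)).exp
  convert hsq using 1
  · ext y; simp only [gaussian]; ring_nf
  · ext v; simp [gaussian]; ring_nf

theorem iteratedFDeriv_two_gaussian_apply (k : ℝ) (x v : E) :
    iteratedFDeriv ℝ 2 (gaussian k) x ![v, v]
      = (k ^ 2 * ⟪x, v⟫ ^ 2 - k * ‖v‖ ^ 2) * gaussian k x := by
  have hgrad_diff : DifferentiableAt ℝ (fderiv ℝ (gaussian (E := E) k)) x :=
    ((contDiff_gaussian k).fderiv_right (m := 1) le_rfl).differentiable one_ne_zero x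
  have hdir : (fun y ↦ fderiv ℝ (gaussian k) y v) = fun y ↦ -k * gaussian k y * ⟪v, y⟫ := by
    ext y
    simp [(hasFDerivAt_gaussian k y).fderiv, real_inner_comm]
  have hdir_deriv : HasFDerivAt (fun y ↦ -k * gaussian k y * ⟪v, y⟫) _ x :=
    ((hasFDerivAt_gaussian k x).const_mul (-k)).mul (innerSL ℝ v).hasFDerivAt
  -- `D²γ(x) v v` is the derivative along `v` of the directional derivative `y ↦ Dγ(y) v`
  have hswap := congrArg (· v) (fderiv_clm_apply hgrad_diff (differentiableAt_const v))
  simp only [hdir, hdir_deriv.fderiv, fderiv_fun_const, Pi.zero_apply,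
    ContinuousLinearMap.comp_zero, zero_add, ContinuousLinearMap.flip_apply] at hswap
  simp only [iteratedFDeriv_two_apply, Matrix.cons_val_zero, Matrix.cons_val_one, ← hswap]
  simp [real_inner_comm]
  ring

end Gaussian

theorem clap_gaussian_smul {d : ℕ} (k : ℝ) (A : ℂ) (x : EuclideanSpace ℝ (Fin d)) :
    clap (fun y ↦ gaussian k y • A) x = ((k ^ 2 * ‖x‖ ^ 2 - d * k) * gaussian k x) • A := by
  simp only [clap, iteratedFDeriv_smul_const_apply (contDiff_gaussian k).contDiffAt,
    ContinuousLinearMap.compContinuousMultilinearMap_coe, Function.comp_apply,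
    ContinuousLinearMap.smulRight_apply, ContinuousLinearMap.id_apply,
    iteratedFDeriv_two_gaussian_apply, EuclideanSpace.inner_single_right, PiLp.norm_single]
  simp [← Finset.sum_mul, Finset.sum_sub_distrib, ← Finset.mul_sum, EuclideanSpace.real_norm_sq_eq]

open Complex

theorem hasDerivAt_mul_cexp_I_mul (B : ℂ) (ν t : ℝ) :
    HasDerivAt (fun s : ℝ ↦ B * cexp (I * ν * s)) (I * ν * (B * cexp (I * ν * t))) t := by
  refine ((((hasDerivAt_id t).ofReal_comp).const_mul (I * ν)).cexp.const_mul B).congr_deriv ?_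
  simp only [id, ofReal_one]
  ring

theorem norm_ofReal_mul_cexp_I_mul {r : ℝ} (hr : 0 ≤ r) (a b : ℝ) :
    ‖(r : ℂ) * cexp (I * a * b)‖ = r := by
  rw [norm_mul, norm_exp, norm_real, Real.norm_of_nonneg hr]
  simp

theorem gausson_solitary_wave_family_general
    (d : ℕ) (lam ω k ν : ℝ) (hlam : lam < 0)
    (hroot : k ^ 2 + 2 * lam * k + ω ^ 2 = 0)
    (u : ℝ → EuclideanSpace ℝ (Fin d) → ℂ)
    (hu : ∀ t x, u t x =
      ((Real.exp (-ν / (2 * lam)) * Real.exp (-(d * k) / (4 * lam))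
        * Real.exp (-k * ‖x‖ ^ 2 / 2) : ℝ) : ℂ) * Complex.exp (Complex.I * ν * t)) :
    ∀ t x, Complex.I * deriv (fun s => u s x) t + (1 / 2 : ℂ) * clap (u t) x
      = -((ω : ℂ) ^ 2) * ((‖x‖ ^ 2 / 2 : ℝ) : ℂ) * u t x
        + (lam : ℂ) * (u t x * ((Real.log (‖u t x‖ ^ 2) : ℝ) : ℂ)) := by
  intro t x
  have hprofile : u t = fun y ↦ gaussian k y •
      (((Real.exp (-ν / (2 * lam)) * Real.exp (-(d * k) / (4 * lam)) : ℝ) : ℂ)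
        * cexp (I * ν * t)) := by
    ext y; rw [hu, gaussian, real_smul]; push_cast; ring
  have htime : deriv (fun s ↦ u s x) t = I * ν * u t x := by
    simp only [hu]
    exact (hasDerivAt_mul_cexp_I_mul _ ν t).deriv
  have hlap : clap (u t) x = ((k ^ 2 * ‖x‖ ^ 2 - d * k : ℝ) : ℂ) * u t x := by
    rw [hprofile, clap_gaussian_smul]; simp only [real_smul]; push_cast; ring
  have hlog : lam * Real.log (‖u t x‖ ^ 2) = -ν - d * k / 2 - lam * k * ‖x‖ ^ 2 := by
    rw [hu, norm_ofReal_mul_cexp_I_mul (by positivity), ← Real.exp_add, ← Real.exp_add,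
      ← Real.exp_nat_mul, Real.log_exp]
    field_simp [hlam.ne]
    ring
  have hlogC : (lam : ℂ) * ((Real.log (‖u t x‖ ^ 2) : ℝ) : ℂ)
      = -ν - d * k / 2 - lam * k * ((‖x‖ : ℝ) : ℂ) ^ 2 := by
    exact_mod_cast congrArg ofReal hlog
  have hrootC : (k : ℂ) ^ 2 + 2 * lam * k + ω ^ 2 = 0 := by exact_mod_cast congrArg ofReal hroot
  rw [htime, hlap]
  push_cast
  linear_combination (u t x * ((‖x‖ : ℝ) : ℂ) ^ 2 / 2) * hrootC - u t x * hlogC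
    + u t x * ν * I_sq

/-- For `λ < 0`, `ω > 0`, `ν ∈ ℝ` and `k > 0` a root of `k² + 2λk + ω² = 0`, the function
`u(t,x) = e^{−ν/(2λ)} e^{−dk/(4λ)} e^{−k|x|²/2} e^{iνt}` solves pointwise the logarithmic
Schrödinger equation `i∂ₜu + (1/2)Δu = −ω²(|x|²/2)u + λ u ln(|u|²)`: each stationary
Gausson generates a continuous family of solitary waves indexed by `ν`. -/
theorem gausson_solitary_wave_family
    (d : ℕ) (hd : 1 ≤ d) (lam ω k ν : ℝ) (hlam : lam < 0) (hω : 0 < ω)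
    (hk : 0 < k) (hroot : k ^ 2 + 2 * lam * k + ω ^ 2 = 0)
    (u : ℝ → EuclideanSpace ℝ (Fin d) → ℂ)
    (hu : ∀ t x, u t x =
      ((Real.exp (-ν / (2 * lam)) * Real.exp (-(d * k) / (4 * lam))
        * Real.exp (-k * ‖x‖ ^ 2 / 2) : ℝ) : ℂ) * Complex.exp (Complex.I * ν * t)) :
    ∀ t x, Complex.I * deriv (fun s => u s x) t + (1 / 2 : ℂ) * clap (u t) x
      = -((ω : ℂ) ^ 2) * ((‖x‖ ^ 2 / 2 : ℝ) : ℂ) * u t x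
        + (lam : ℂ) * (u t x * ((Real.log (‖u t x‖ ^ 2) : ℝ) : ℂ)) :=
  gausson_solitary_wave_family_general d lam ω k ν hlam hroot u hu
end

section
/- Let d ≥ 1 and −λ > ω > 0, and set k_± = −λ ± √(λ²−ω²). Then the Gaussons φ_{k_−} and φ_{k_+} satisfy ‖φ_{k_−}‖_{L²(ℝ^d)} > ‖φ_{k_+}‖_{L²(ℝ^d)}; equivalently, e^{−k_−/λ}/k_− > e^{−k_+/λ}/k_+. -/
open MeasureTheory Real

/-! The Gaussian integral gives `‖φ_k‖² = (π e^{-k/λ} / k)^{d/2}`, so both claims reduce to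
comparing `e^{-k/λ} / k` at `k_± = μ (1 ± u)`, where `μ = -λ` and `u = √(λ² - ω²) / μ ∈ (0, 1)`.
That comparison is `e^{2u} < (1 + u) / (1 - u)`, i.e. `2u < log (1 + u) - log (1 - u)`, which
holds because the right side is the power series `2u + 2u³/3 + 2u⁵/5 + ⋯` with positive terms. -/

theorem two_mul_lt_log_one_add_sub_log_one_sub {u : ℝ} (hu₀ : 0 < u) (hu₁ : u < 1) :
    2 * u < log (1 + u) - log (1 - u) := by
  refine hasSum_lt (f := Pi.single 0 (2 * u)) (i := 1) (fun k ↦ ?_) ?_ (hasSum_pi_single 0 _)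
    (hasSum_log_sub_log_of_abs_lt_one (abs_lt.2 ⟨by linarith, hu₁⟩))
  · rcases eq_or_ne k 0 with rfl | hk
    · simp
    · rw [Pi.single_eq_of_ne hk]
      positivity
  · norm_num
    positivity

theorem exp_div_one_add_lt_exp_neg_div_one_sub {u : ℝ} (hu₀ : 0 < u) (hu₁ : u < 1) :
    exp u / (1 + u) < exp (-u) / (1 - u) := by
  have h : exp (2 * u) < (1 + u) / (1 - u) := by
    rw [← exp_log (by positivity : 0 < (1 + u) / (1 - u)), log_div (by linarith) (by linarith)]
    exact exp_lt_exp.2 (two_mul_lt_log_one_add_sub_log_one_sub hu₀ hu₁)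
  rw [lt_div_iff₀ (by linarith)] at h
  rw [div_lt_div_iff₀ (by linarith) (by linarith)]
  calc exp u * (1 - u) = exp (2 * u) * (1 - u) * exp (-u) := by
        rw [mul_right_comm, ← exp_add]; ring_nf
    _ < (1 + u) * exp (-u) := by gcongr
    _ = exp (-u) * (1 + u) := mul_comm _ _

theorem exp_neg_div_div_add_lt_sub {lam r : ℝ} (hr₀ : 0 < r) (hr : r < -lam) :
    exp (-(-lam + r) / lam) / (-lam + r) < exp (-(-lam - r) / lam) / (-lam - r) := by
  obtain ⟨μ, rfl⟩ : ∃ μ, lam = -μ := ⟨-lam, (neg_neg lam).symm⟩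
  rw [neg_neg] at hr ⊢
  have hμ : 0 < μ := hr₀.trans hr
  obtain ⟨u, rfl⟩ : ∃ u, r = μ * u := ⟨r / μ, by field_simp⟩
  have hu₀ : 0 < u := pos_of_mul_pos_right hr₀ hμ.le
  have hu₁ : u < 1 := by nlinarith
  calc exp (-(μ + μ * u) / -μ) / (μ + μ * u) = exp 1 / μ * (exp u / (1 + u)) := by
        rw [neg_div_neg_eq, ← mul_one_add, mul_div_cancel_left₀ _ hμ.ne', exp_add]
        field_simp
    _ < exp 1 / μ * (exp (-u) / (1 - u)) :=
        mul_lt_mul_of_pos_left (exp_div_one_add_lt_exp_neg_div_one_sub hu₀ hu₁)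
          (div_pos (exp_pos 1) hμ)
    _ = exp (-(μ - μ * u) / -μ) / (μ - μ * u) := by
        rw [neg_div_neg_eq, ← mul_one_sub, mul_div_cancel_left₀ _ hμ.ne', sub_eq_add_neg, exp_add]
        field_simp

theorem integral_sq_exp_mul_exp_neg_mul_sq_norm {E : Type*} [NormedAddCommGroup E]
    [InnerProductSpace ℝ E] [FiniteDimensional ℝ E] [MeasurableSpace E] [BorelSpace E]
    (c : ℝ) {k : ℝ} (hk : 0 < k) :
    ∫ x : E, (exp c * exp (-k * ‖x‖ ^ 2 / 2)) ^ 2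
      = exp (2 * c) * (π / k) ^ (Module.finrank ℝ E / 2 : ℝ) := by
  have h : ∀ x : E, (exp c * exp (-k * ‖x‖ ^ 2 / 2)) ^ 2 = exp (2 * c) * exp (-k * ‖x‖ ^ 2) := by
    intro x
    rw [mul_pow, ← exp_nat_mul, ← exp_nat_mul]
    ring_nf
  simp_rw [h]
  rw [integral_const_mul, GaussianFourier.integral_rexp_neg_mul_sq_norm hk]

theorem integral_sq_gausson (d : ℕ) (lam : ℝ) {k : ℝ} (hk : 0 < k) :
    ∫ x : EuclideanSpace ℝ (Fin d), (exp (-(d * k) / (4 * lam)) * exp (-k * ‖x‖ ^ 2 / 2)) ^ 2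
      = (π * (exp (-k / lam) / k)) ^ (d / 2 : ℝ) := by
  rw [integral_sq_exp_mul_exp_neg_mul_sq_norm _ hk, finrank_euclideanSpace_fin,
    mul_div_left_comm, mul_rpow pi_pos.le (by positivity), div_rpow (exp_pos _).le hk.le,
    div_rpow pi_pos.le hk.le, ← exp_mul]
  ring_nf

/-- For `−λ > ω > 0` and `k_± = −λ ± √(λ²−ω²)`, the Gausson `φ_{k₋}` has strictly larger
L² norm than `φ_{k₊}` (stated for the squared L² norms, which are positive); equivalently,
`e^{−k₋/λ}/k₋ > e^{−k₊/λ}/k₊`. -/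
theorem gausson_L2_norm_comparison
    (d : ℕ) (hd : 1 ≤ d) (lam ω : ℝ) (hω : 0 < ω) (hlo : ω < -lam)
    (kp km : ℝ) (hkp : kp = -lam + Real.sqrt (lam ^ 2 - ω ^ 2))
    (hkm : km = -lam - Real.sqrt (lam ^ 2 - ω ^ 2)) :
    (∫ x : EuclideanSpace ℝ (Fin d),
        (Real.exp (-(d * km) / (4 * lam)) * Real.exp (-km * ‖x‖ ^ 2 / 2)) ^ 2)
      > (∫ x : EuclideanSpace ℝ (Fin d),
        (Real.exp (-(d * kp) / (4 * lam)) * Real.exp (-kp * ‖x‖ ^ 2 / 2)) ^ 2)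
    ∧ Real.exp (-km / lam) / km > Real.exp (-kp / lam) / kp := by
  set r := √(lam ^ 2 - ω ^ 2)
  have hr₀ : 0 < r := sqrt_pos.2 (by nlinarith)
  have hr : r < -lam := by
    rw [← abs_of_neg (by linarith : lam < 0), ← sqrt_sq_eq_abs]
    exact sqrt_lt_sqrt (by nlinarith) (by nlinarith)
  have hkm₀ : 0 < km := by linarith
  have hkp₀ : 0 < kp := by linarith
  have hmass : exp (-kp / lam) / kp < exp (-km / lam) / km := by
    subst hkp hkm
    simpa only [neg_div] using exp_neg_div_div_add_lt_sub hr₀ hr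
  refine ⟨?_, hmass⟩
  rw [integral_sq_gausson d lam hkm₀, integral_sq_gausson d lam hkp₀]
  exact rpow_lt_rpow (by positivity) (mul_lt_mul_of_pos_left hmass pi_pos)
    (div_pos (Nat.cast_pos.2 hd) two_pos)
end

section
/- Let λ, ω ∈ ℝ with ω > 0. Let a, b : ℝ → ℂ be differentiable with b(t) ≠ 0 and Re a(t) > 0 for all t, and define u(t,x) = b(t) e^{−a(t)x²/2} for (t,x) ∈ ℝ×ℝ. Then u is a classical solution of the one-dimensional equation i∂ₜu + (1/2)∂ₓ²u = −ω²(x²/2)u + λ u ln(|u|²) if and only if a and b satisfy the ODE system i b′(t) = (1/2)a(t)b(t) + λ b(t) ln|b(t)|² and i a′(t) = a(t)² + 2λ Re a(t) + ω² for all t ∈ ℝ. -/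
/-- The logarithmic nonlinearity `z ↦ z ln|z|²`, vanishing at `z = 0`. -/
noncomputable def logNL (z : ℂ) : ℂ := z * ((Real.log (‖z‖ ^ 2) : ℝ) : ℂ)

/-! For a Gaussian `u = b e^{-a x²/2}` each term of the equation is `u` times a polynomial
`p + q x²`: this holds for `∂ₜu` and `∂ₓ²u` by differentiation, and for `u ln|u|²` because
`ln|u|² = ln|b|² - (Re a) x²`, which is why the logarithmic nonlinearity preserves Gaussians.
Cancelling the nonvanishing exponential, the equation holds for all `x` iff both coefficients
vanish; the constant one is the equation for `b`, and the `x²` one is `b` times the equation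
for `a`. -/

open Complex

theorem hasDerivAt_gaussian (α β : ℂ) (y : ℝ) :
    HasDerivAt (fun x : ℝ => β * cexp (-α * (x : ℂ) ^ 2 / 2))
      (β * cexp (-α * (y : ℂ) ^ 2 / 2) * (-α * y)) y := by
  have hsq : HasDerivAt (fun x : ℝ => (x : ℂ) ^ 2) (2 * y) y := by
    simpa using (hasDerivAt_id y).ofReal_comp.fun_pow 2
  exact ((((hsq.const_mul (-α)).div_const 2).cexp).const_mul β).congr_deriv (by ring)

theorem deriv_deriv_gaussian (α β : ℂ) (y : ℝ) :
    deriv (deriv fun x : ℝ => β * cexp (-α * (x : ℂ) ^ 2 / 2)) y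
      = β * cexp (-α * (y : ℂ) ^ 2 / 2) * (α ^ 2 * y ^ 2 - α) := by
  have hlin : HasDerivAt (fun x : ℝ => -α * (x : ℂ)) (-α) y := by
    simpa using (hasDerivAt_id y).ofReal_comp.const_mul (-α)
  rw [funext fun x => (hasDerivAt_gaussian α β x).deriv,
    ((hasDerivAt_gaussian α β y).fun_mul hlin).deriv]
  ring

theorem hasDerivAt_gaussian_of_coeffs {a b : ℝ → ℂ} {a' b' : ℂ} {t : ℝ}
    (ha : HasDerivAt a a' t) (hb : HasDerivAt b b' t) (x : ℝ) :
    HasDerivAt (fun s => b s * cexp (-a s * (x : ℂ) ^ 2 / 2))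
      ((b' - b t * a' * (x : ℂ) ^ 2 / 2) * cexp (-a t * (x : ℂ) ^ 2 / 2)) t :=
  (hb.fun_mul ((ha.fun_neg.mul_const ((x : ℂ) ^ 2)).div_const 2).cexp).congr_deriv (by ring)

theorem re_neg_mul_sq_div_two (α : ℂ) (x : ℝ) :
    (-α * (x : ℂ) ^ 2 / 2).re = -(α.re * x ^ 2) / 2 := by
  have : -α * (x : ℂ) ^ 2 / 2 = ((-(x ^ 2) / 2 : ℝ) : ℂ) * α := by push_cast; ring
  rw [this, re_ofReal_mul]
  ring

theorem logNL_gaussian {β : ℂ} (hβ : β ≠ 0) (α : ℂ) (x : ℝ) :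
    logNL (β * cexp (-α * (x : ℂ) ^ 2 / 2))
      = β * cexp (-α * (x : ℂ) ^ 2 / 2)
        * ((Real.log (‖β‖ ^ 2) : ℝ) - (α.re : ℂ) * (x : ℂ) ^ 2) := by
  have hnorm : ‖β * cexp (-α * (x : ℂ) ^ 2 / 2)‖ ^ 2 = ‖β‖ ^ 2 * Real.exp (-(α.re * x ^ 2)) := by
    rw [norm_mul, norm_exp, re_neg_mul_sq_div_two, mul_pow, ← Real.exp_nat_mul]
    ring_nf
  rw [logNL, hnorm, Real.log_mul (by positivity) (Real.exp_ne_zero _), Real.log_exp]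
  push_cast
  ring

theorem forall_add_sq_mul_eq_zero_iff {A B : ℂ} :
    (∀ x : ℝ, A + (x : ℂ) ^ 2 * B = 0) ↔ A = 0 ∧ B = 0 := by
  refine ⟨fun h => ?_, fun ⟨hA, hB⟩ x => by simp [hA, hB]⟩
  have h0 : A = 0 := by simpa using h 0
  have h1 : A + B = 0 := by simpa using h 1
  exact ⟨h0, by linear_combination h1 - h0⟩

theorem gaussian_logSchrodinger_iff {a b : ℝ → ℂ} {t : ℝ} (ha : DifferentiableAt ℝ a t)
    (hb : DifferentiableAt ℝ b t) (hbt : b t ≠ 0) (lam ω x : ℝ) :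
    I * deriv (fun s => b s * cexp (-a s * (x : ℂ) ^ 2 / 2)) t
        + (1 / 2 : ℂ) * deriv (deriv fun y : ℝ => b t * cexp (-a t * (y : ℂ) ^ 2 / 2)) x
      = -((ω : ℂ) ^ 2) * ((x ^ 2 / 2 : ℝ) : ℂ) * (b t * cexp (-a t * (x : ℂ) ^ 2 / 2))
        + lam * logNL (b t * cexp (-a t * (x : ℂ) ^ 2 / 2))
    ↔ I * deriv b t - ((1 / 2 : ℂ) * a t * b t + lam * b t * (Real.log (‖b t‖ ^ 2) : ℝ))
        + (x : ℂ) ^ 2 * (-(b t / 2)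
          * (I * deriv a t - ((a t) ^ 2 + 2 * lam * ((a t).re : ℝ) + (ω : ℂ) ^ 2))) = 0 := by
  have hG : cexp (-a t * (x : ℂ) ^ 2 / 2) ≠ 0 := exp_ne_zero _
  rw [(hasDerivAt_gaussian_of_coeffs ha.hasDerivAt hb.hasDerivAt x).deriv,
    deriv_deriv_gaussian, logNL_gaussian hbt]
  push_cast
  constructor
  · intro h
    refine mul_left_cancel₀ hG ?_
    linear_combination h
  · intro h
    linear_combination cexp (-a t * (x : ℂ) ^ 2 / 2) * h

theorem gaussian_ansatz_iff_ode_system_general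
    (lam ω : ℝ) (a b : ℝ → ℂ)
    (ha : Differentiable ℝ a) (hb : Differentiable ℝ b)
    (hbne : ∀ t, b t ≠ 0)
    (u : ℝ → ℝ → ℂ)
    (hu : ∀ t x, u t x = b t * Complex.exp (-(a t) * (x : ℂ) ^ 2 / 2)) :
    (∀ t x, Complex.I * deriv (fun s => u s x) t
        + (1 / 2 : ℂ) * deriv (deriv (u t)) x
      = -((ω : ℂ) ^ 2) * ((x ^ 2 / 2 : ℝ) : ℂ) * u t x + (lam : ℂ) * logNL (u t x))
    ↔ (∀ t, Complex.I * deriv b t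
          = (1 / 2 : ℂ) * a t * b t
            + (lam : ℂ) * b t * ((Real.log (‖b t‖ ^ 2) : ℝ) : ℂ)
        ∧ Complex.I * deriv a t
          = (a t) ^ 2 + 2 * (lam : ℂ) * (((a t).re : ℝ) : ℂ) + (ω : ℂ) ^ 2) := by
  obtain rfl : u = fun t (x : ℝ) => b t * cexp (-a t * (x : ℂ) ^ 2 / 2) := funext₂ hu
  refine forall_congr' fun t => ?_
  have hb_half : -(b t / 2) ≠ 0 := by simpa using hbne t
  rw [forall_congr' (gaussian_logSchrodinger_iff (ha t) (hb t) (hbne t) lam ω),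
    forall_add_sq_mul_eq_zero_iff, mul_eq_zero, or_iff_right hb_half, sub_eq_zero, sub_eq_zero]

/-- A Gaussian ansatz `u(t,x) = b(t) e^{−a(t)x²/2}` (with `a`, `b` differentiable,
`b` nonvanishing and `Re a > 0`) is a classical solution of the one-dimensional
logarithmic Schrödinger equation with repulsive harmonic potential
`i∂ₜu + (1/2)∂ₓ²u = −ω²(x²/2)u + λ u ln(|u|²)` if and only if
`i b′ = (1/2)ab + λ b ln|b|²` and `i a′ = a² + 2λ Re a + ω²`. -/
theorem gaussian_ansatz_iff_ode_system
    (lam ω : ℝ) (hω : 0 < ω) (a b : ℝ → ℂ)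
    (ha : Differentiable ℝ a) (hb : Differentiable ℝ b)
    (hbne : ∀ t, b t ≠ 0) (hare : ∀ t, 0 < (a t).re)
    (u : ℝ → ℝ → ℂ)
    (hu : ∀ t x, u t x = b t * Complex.exp (-(a t) * (x : ℂ) ^ 2 / 2)) :
    (∀ t x, Complex.I * deriv (fun s => u s x) t
        + (1 / 2 : ℂ) * deriv (deriv (u t)) x
      = -((ω : ℂ) ^ 2) * ((x ^ 2 / 2 : ℝ) : ℂ) * u t x + (lam : ℂ) * logNL (u t x))
    ↔ (∀ t, Complex.I * deriv b t
          = (1 / 2 : ℂ) * a t * b t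
            + (lam : ℂ) * b t * ((Real.log (‖b t‖ ^ 2) : ℝ) : ℂ)
        ∧ Complex.I * deriv a t
          = (a t) ^ 2 + 2 * (lam : ℂ) * (((a t).re : ℝ) : ℂ) + (ω : ℂ) ^ 2) :=
  gaussian_ansatz_iff_ode_system_general lam ω a b ha hb hbne u hu
end

section
/- Let λ ∈ ℝ, ω > 0, and let τ : [0,∞) → ℝ be twice differentiable with τ(t) > 0 for all t ≥ 0, satisfying τ″ = 2λ/τ + 1/τ³ + ω²τ on [0,∞). Then τ is bounded away from zero: there exists δ > 0 such that τ(t) ≥ δ for all t ≥ 0. -/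
/-!
Multiplying the equation by `2τ′` shows that `(τ′)² − V(τ)` is conserved, where
`V(x) = 4λ log x − 1/x² + ω²x²` satisfies `V′(x)/2 = 2λ/x + 1/x³ + ω²x`. Hence
`V(τ(t)) ≥ V(τ(0)) − τ′(0)²` for all `t ≥ 0`, and since `V(x) → −∞` as `x → 0⁺`
(the term `−1/x²` dominates `4λ log x`), this lower bound keeps `τ` away from `0`.
-/

open Real Filter Topology Set

noncomputable def widthPotential (lam ω x : ℝ) : ℝ :=
  4 * lam * log x - 1 / x ^ 2 + ω ^ 2 * x ^ 2

lemma hasDerivAt_widthPotential (lam ω : ℝ) {x : ℝ} (hx : x ≠ 0) :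
    HasDerivAt (widthPotential lam ω) (2 * (2 * lam / x + 1 / x ^ 3 + ω ^ 2 * x)) x := by
  have h := (((hasDerivAt_log hx).const_mul (4 * lam)).fun_sub
    ((hasDerivAt_pow 2 x).fun_inv (pow_ne_zero 2 hx))).fun_add
    ((hasDerivAt_pow 2 x).const_mul (ω ^ 2))
  refine (h.congr_deriv ?_).congr_of_eventuallyEq (.of_eq (funext fun y => ?_))
  · norm_num; field_simp; ring
  · simp only [widthPotential, one_div]

lemma tendsto_widthPotential_nhdsGT_zero (lam ω : ℝ) :
    Tendsto (widthPotential lam ω) (𝓝[>] 0) atBot := by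
  -- `widthPotential lam ω x = x⁻² (4λ x² log x − 1 + ω²x⁴)` with the bracket tending to `−1`.
  have hlog : Tendsto (fun x : ℝ => log x * x ^ 2) (𝓝[>] 0) (𝓝 0) := by
    simpa only [rpow_two] using tendsto_log_mul_rpow_nhdsGT_zero two_pos
  have hpoly : Tendsto (fun x : ℝ => ω ^ 2 * x ^ 4) (𝓝[>] 0) (𝓝 0) := by
    have : Continuous (fun x : ℝ => ω ^ 2 * x ^ 4) := by fun_prop
    simpa using (this.tendsto 0).mono_left nhdsWithin_le_nhds
  have hnum : Tendsto (fun x : ℝ => 4 * lam * (log x * x ^ 2) - 1 + ω ^ 2 * x ^ 4)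
      (𝓝[>] 0) (𝓝 (-1)) := by
    simpa using ((hlog.const_mul (4 * lam)).sub_const 1).add hpoly
  have hinv : Tendsto (fun x : ℝ => x⁻¹ ^ 2) (𝓝[>] 0) atTop :=
    (tendsto_pow_atTop two_ne_zero).comp tendsto_inv_nhdsGT_zero
  refine (hnum.neg_mul_atTop (by norm_num) hinv).congr' ?_
  filter_upwards [self_mem_nhdsWithin] with x (hx : 0 < x)
  simp only [widthPotential]
  field_simp

lemma exists_pos_le_of_le_widthPotential (lam ω C : ℝ) :
    ∃ δ > 0, ∀ x, 0 < x → C ≤ widthPotential lam ω x → δ ≤ x := by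
  obtain ⟨δ, hδ, hsub⟩ := mem_nhdsGT_iff_exists_Ioo_subset.1
    ((tendsto_widthPotential_nhdsGT_zero lam ω).eventually (eventually_lt_atBot C))
  refine ⟨δ / 2, half_pos hδ, fun x hx hC => ?_⟩
  by_contra! hlt
  exact (hsub ⟨hx, by linarith⟩ : widthPotential lam ω x < C).not_ge hC

lemma hasDerivAt_sq_deriv_sub_comp {f f' f'' F : ℝ → ℝ} {t : ℝ}
    (hf : HasDerivAt f (f' t) t) (hf' : HasDerivAt f' (f'' t) t)
    (hF : HasDerivAt F (2 * f'' t) (f t)) :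
    HasDerivAt (fun s => f' s ^ 2 - F (f s)) 0 t :=
  ((hf'.fun_pow 2).fun_sub (hF.comp t hf)).congr_deriv (by ring)

lemma apply_eq_of_hasDerivAt_zero_on_Ici {f : ℝ → ℝ} {a : ℝ}
    (hf : ∀ t, a ≤ t → HasDerivAt f 0 t) :
    ∀ t, a ≤ t → f t = f a := fun b hb =>
  constant_of_has_deriv_right_zero (fun x hx => (hf x hx.1).continuousAt.continuousWithinAt)
    (fun x hx => (hf x hx.1).hasDerivWithinAt) b ⟨hb, le_rfl⟩

theorem ode_solution_bounded_away_from_zero_general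
    (lam ω : ℝ) (τ τ' τ'' : ℝ → ℝ)
    (hd1 : ∀ t, 0 ≤ t → HasDerivAt τ (τ' t) t)
    (hd2 : ∀ t, 0 ≤ t → HasDerivAt τ' (τ'' t) t)
    (hpos : ∀ t, 0 ≤ t → 0 < τ t)
    (hode : ∀ t, 0 ≤ t → τ'' t = 2 * lam / τ t + 1 / (τ t) ^ 3 + ω ^ 2 * τ t) :
    ∃ δ > 0, ∀ t, 0 ≤ t → δ ≤ τ t := by
  have henergy : ∀ t, 0 ≤ t →
      τ' t ^ 2 - widthPotential lam ω (τ t) = τ' 0 ^ 2 - widthPotential lam ω (τ 0) :=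
    apply_eq_of_hasDerivAt_zero_on_Ici fun t ht =>
      hasDerivAt_sq_deriv_sub_comp (hd1 t ht) (hd2 t ht)
        (hode t ht ▸ hasDerivAt_widthPotential lam ω (hpos t ht).ne')
  obtain ⟨δ, hδ, hbound⟩ :=
    exists_pos_le_of_le_widthPotential lam ω (widthPotential lam ω (τ 0) - τ' 0 ^ 2)
  refine ⟨δ, hδ, fun t ht => hbound _ (hpos t ht) ?_⟩
  nlinarith [henergy t ht, sq_nonneg (τ' t)]

/-- Any positive twice differentiable solution of `τ″ = 2λ/τ + 1/τ³ + ω²τ` on `[0,∞)`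
is bounded away from zero: there exists `δ > 0` with `τ(t) ≥ δ` for all `t ≥ 0`. -/
theorem ode_solution_bounded_away_from_zero
    (lam ω : ℝ) (hω : 0 < ω) (τ τ' τ'' : ℝ → ℝ)
    (hd1 : ∀ t, 0 ≤ t → HasDerivAt τ (τ' t) t)
    (hd2 : ∀ t, 0 ≤ t → HasDerivAt τ' (τ'' t) t)
    (hpos : ∀ t, 0 ≤ t → 0 < τ t)
    (hode : ∀ t, 0 ≤ t → τ'' t = 2 * lam / τ t + 1 / (τ t) ^ 3 + ω ^ 2 * τ t) :
    ∃ δ > 0, ∀ t, 0 ≤ t → δ ≤ τ t :=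
  ode_solution_bounded_away_from_zero_general lam ω τ τ' τ'' hd1 hd2 hpos hode
end

section
/- Let ω > −λ > 0 (so λ < 0 and ω > |λ|), and let τ : [0,∞) → ℝ be twice differentiable with τ(t) > 0 for all t ≥ 0, satisfying τ″ = 2λ/τ + 1/τ³ + ω²τ on [0,∞). Then τ(t) → ∞ as t → ∞, and there exist constants C₁, C₂ > 0 and T ≥ 0 such that C₁ e^{ωt} ≤ τ(t) ≤ C₂ e^{ωt} for all t ≥ T. Consequently every Gaussian solution of the equation disperses exponentially fast. -/
/-!
Because `ω²x⁴ + 2λx² + 1 > 0` when `ω > |λ|`, we have `τ'' > 0`, so `τ'` increases. It cannot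
stay `≤ 0`: `τ` would then stay below `τ 0`, which bounds `τ''` below by a positive constant.
Hence `τ' ≥ p > 0` eventually and `τ → ∞`. Once `τ` is large, `ω²τ + 2λ ≤ τ'' ≤ ω²τ`, and
comparison with the linear equation `k'' = ω²k`, whose solutions are combinations of `cosh` and
`sinh` of `ω(t - T)`, traps `τ + 2λ/ω²` from below and `τ` from above by such combinations;
both grow like `e^{ωt}`.
-/

open Filter Real Set

section DifferentialInequalities

variable {f f' f'' : ℝ → ℝ} {a : ℝ}

theorem monotoneOn_Ici_of_hasDerivAt_nonneg (hf : ∀ t, a ≤ t → HasDerivAt f (f' t) t)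
    (h : ∀ t, a ≤ t → 0 ≤ f' t) : MonotoneOn f (Ici a) :=
  monotoneOn_of_hasDerivWithinAt_nonneg (convex_Ici a)
    (fun t ht => (hf t ht).continuousAt.continuousWithinAt)
    (fun t ht => (hf t (interior_subset ht)).hasDerivWithinAt)
    (fun t ht => h t (interior_subset ht))

theorem add_mul_sub_le_of_hasDerivAt_ge {c : ℝ} (hf : ∀ t, a ≤ t → HasDerivAt f (f' t) t)
    (h : ∀ t, a ≤ t → c ≤ f' t) {t : ℝ} (ht : a ≤ t) : f a + c * (t - a) ≤ f t := by
  have hmono : MonotoneOn (fun s => f s - c * s) (Ici a) :=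
    monotoneOn_Ici_of_hasDerivAt_nonneg (fun s hs => (hf s hs).sub ((hasDerivAt_id s).const_mul c))
      (fun s hs => by simpa using h s hs)
  have : f a - c * a ≤ f t - c * t := hmono self_mem_Ici ht ht
  linarith

theorem tendsto_atTop_of_hasDerivAt_ge {c : ℝ} (hc : 0 < c)
    (hf : ∀ t, a ≤ t → HasDerivAt f (f' t) t) (h : ∀ t, a ≤ t → c ≤ f' t) :
    Tendsto f atTop atTop :=
  tendsto_atTop_mono' _ (eventually_atTop.2 ⟨a, fun _ ht => add_mul_sub_le_of_hasDerivAt_ge hf h ht⟩)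
    (tendsto_atTop_add_const_left _ _
      ((tendsto_atTop_add_const_right atTop (-a) tendsto_id).const_mul_atTop hc))

theorem hasDerivAt_exp_mul_sub (c a t : ℝ) :
    HasDerivAt (fun s => exp (c * (s - a))) (c * exp (c * (t - a))) t := by
  simpa [mul_comm] using (((hasDerivAt_id t).sub_const a).const_mul c).exp

theorem mul_exp_le_of_hasDerivAt_ge {c : ℝ} (hf : ∀ t, a ≤ t → HasDerivAt f (f' t) t)
    (h : ∀ t, a ≤ t → c * f t ≤ f' t) {t : ℝ} (ht : a ≤ t) :
    f a * exp (c * (t - a)) ≤ f t := by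
  have hmono : MonotoneOn (fun s => f s * exp (-c * (s - a))) (Ici a) :=
    monotoneOn_Ici_of_hasDerivAt_nonneg (fun s hs => (hf s hs).mul (hasDerivAt_exp_mul_sub _ a s))
      (fun s hs => by nlinarith [h s hs, exp_pos (-c * (s - a))])
  have key := hmono self_mem_Ici ht ht
  simp only [sub_self, mul_zero, exp_zero, mul_one] at key
  calc f a * exp (c * (t - a)) ≤ f t * exp (-c * (t - a)) * exp (c * (t - a)) := by gcongr
    _ = f t := by rw [mul_assoc, ← exp_add, neg_mul, neg_add_cancel, exp_zero, mul_one]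

theorem le_mul_exp_of_hasDerivAt_le {c : ℝ} (hf : ∀ t, a ≤ t → HasDerivAt f (f' t) t)
    (h : ∀ t, a ≤ t → f' t ≤ c * f t) {t : ℝ} (ht : a ≤ t) :
    f t ≤ f a * exp (c * (t - a)) := by
  have := mul_exp_le_of_hasDerivAt_ge (f := fun s => -f s) (c := c) (fun s hs => (hf s hs).neg)
    (fun s hs => by linarith [h s hs]) ht
  linarith

theorem nonpos_of_deriv2_le_sq_mul {ω : ℝ} (hf : ∀ t, a ≤ t → HasDerivAt f (f' t) t)
    (hf' : ∀ t, a ≤ t → HasDerivAt f' (f'' t) t) (h : ∀ t, a ≤ t → f'' t ≤ ω ^ 2 * f t)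
    (ha : f a = 0) (ha' : f' a = 0) {t : ℝ} (ht : a ≤ t) : f t ≤ 0 := by
  -- `f'' - ω²f = (d/dt + ω)(f' - ωf)`: two first-order Grönwall steps
  have hg : ∀ s, a ≤ s → f' s - ω * f s ≤ 0 := fun s hs => by
    simpa [ha, ha'] using le_mul_exp_of_hasDerivAt_le (f := fun s => f' s - ω * f s) (c := -ω)
      (fun u hu => (hf' u hu).sub ((hf u hu).const_mul ω)) (fun u hu => by linarith [h u hu]) hs
  simpa [ha] using le_mul_exp_of_hasDerivAt_le (c := ω) hf (fun s hs => by linarith [hg s hs]) ht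

theorem hasDerivAt_mul_cosh_add_mul_sinh (A B ω a t : ℝ) :
    HasDerivAt (fun s => A * cosh (ω * (s - a)) + B * sinh (ω * (s - a)))
      (ω * (B * cosh (ω * (t - a)) + A * sinh (ω * (t - a)))) t := by
  have hlin : HasDerivAt (fun s => ω * (s - a)) ω t := by
    simpa using ((hasDerivAt_id t).sub_const a).const_mul ω
  exact ((hlin.cosh.const_mul A).add (hlin.sinh.const_mul B)).congr_deriv (by ring)

theorem le_mul_cosh_add_mul_sinh_of_deriv2_le {ω : ℝ} (hω : ω ≠ 0)
    (hf : ∀ t, a ≤ t → HasDerivAt f (f' t) t) (hf' : ∀ t, a ≤ t → HasDerivAt f' (f'' t) t)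
    (h : ∀ t, a ≤ t → f'' t ≤ ω ^ 2 * f t) {t : ℝ} (ht : a ≤ t) :
    f t ≤ f a * cosh (ω * (t - a)) + f' a / ω * sinh (ω * (t - a)) := by
  set k := fun s => f a * cosh (ω * (s - a)) + f' a / ω * sinh (ω * (s - a))
  set k' := fun s => ω * (f' a / ω * cosh (ω * (s - a)) + f a * sinh (ω * (s - a)))
  have hk : ∀ s, HasDerivAt k (k' s) s := hasDerivAt_mul_cosh_add_mul_sinh _ _ ω a
  have hk' : ∀ s, HasDerivAt k' (ω ^ 2 * k s) s := fun s =>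
    ((hasDerivAt_mul_cosh_add_mul_sinh _ _ ω a s).const_mul ω).congr_deriv (by simp only [k]; ring)
  have := nonpos_of_deriv2_le_sq_mul (f := fun s => f s - k s) (ω := ω)
    (fun s hs => (hf s hs).sub (hk s)) (fun s hs => (hf' s hs).sub (hk' s))
    (fun s hs => by linarith [h s hs]) (by simp [k]) (by simp [k']; field_simp; ring) ht
  linarith

theorem mul_cosh_add_mul_sinh_le_of_sq_mul_le_deriv2 {ω : ℝ} (hω : ω ≠ 0)
    (hf : ∀ t, a ≤ t → HasDerivAt f (f' t) t) (hf' : ∀ t, a ≤ t → HasDerivAt f' (f'' t) t)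
    (h : ∀ t, a ≤ t → ω ^ 2 * f t ≤ f'' t) {t : ℝ} (ht : a ≤ t) :
    f a * cosh (ω * (t - a)) + f' a / ω * sinh (ω * (t - a)) ≤ f t := by
  have := le_mul_cosh_add_mul_sinh_of_deriv2_le (f := fun s => -f s) (f' := fun s => -f' s) hω
    (fun s hs => (hf s hs).neg) (fun s hs => (hf' s hs).neg) (fun s hs => by linarith [h s hs]) ht
  simp only [neg_mul, neg_div] at this
  linarith

theorem mul_cosh_add_mul_sinh_le_mul_exp {A B x : ℝ} (hA : 0 ≤ A) (hB : 0 ≤ B) (hx : 0 ≤ x) :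
    A * cosh x + B * sinh x ≤ (A + B) * exp x := by
  rw [← cosh_add_sinh]
  nlinarith [mul_nonneg hA (sinh_nonneg_iff.2 hx), mul_nonneg hB (cosh_pos x).le]

theorem half_mul_exp_le_mul_cosh_add_mul_sinh {A B x : ℝ} (hA : 0 ≤ A) (hB : 0 ≤ B)
    (hx : 0 ≤ x) : A / 2 * exp x ≤ A * cosh x + B * sinh x := by
  rw [cosh_eq]
  nlinarith [mul_nonneg hA (exp_pos (-x)).le, mul_nonneg hB (sinh_nonneg_iff.2 hx)]

theorem exists_le_mul_exp_of_deriv2_le {ω : ℝ} (hω : 0 < ω)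
    (hf : ∀ t, a ≤ t → HasDerivAt f (f' t) t) (hf' : ∀ t, a ≤ t → HasDerivAt f' (f'' t) t)
    (h : ∀ t, a ≤ t → f'' t ≤ ω ^ 2 * f t) (ha : 0 < f a) (ha' : 0 ≤ f' a) :
    ∃ C > 0, ∀ t, a ≤ t → f t ≤ C * exp (ω * t) := by
  have hB : 0 ≤ f' a / ω := div_nonneg ha' hω.le
  refine ⟨(f a + f' a / ω) * exp (-(ω * a)), mul_pos (by linarith) (exp_pos _), fun t ht => ?_⟩
  calc f t ≤ _ := le_mul_cosh_add_mul_sinh_of_deriv2_le hω.ne' hf hf' h ht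
    _ ≤ (f a + f' a / ω) * exp (ω * (t - a)) :=
      mul_cosh_add_mul_sinh_le_mul_exp ha.le hB (mul_nonneg hω.le (sub_nonneg.2 ht))
    _ = _ := by rw [mul_sub, sub_eq_add_neg, exp_add]; ring

theorem exists_mul_exp_le_of_sq_mul_le_deriv2 {ω : ℝ} (hω : 0 < ω)
    (hf : ∀ t, a ≤ t → HasDerivAt f (f' t) t) (hf' : ∀ t, a ≤ t → HasDerivAt f' (f'' t) t)
    (h : ∀ t, a ≤ t → ω ^ 2 * f t ≤ f'' t) (ha : 0 < f a) (ha' : 0 ≤ f' a) :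
    ∃ C > 0, ∀ t, a ≤ t → C * exp (ω * t) ≤ f t := by
  refine ⟨f a / 2 * exp (-(ω * a)), by positivity, fun t ht => ?_⟩
  calc f a / 2 * exp (-(ω * a)) * exp (ω * t) = f a / 2 * exp (ω * (t - a)) := by
        rw [mul_sub, sub_eq_add_neg, exp_add]; ring
    _ ≤ _ := half_mul_exp_le_mul_cosh_add_mul_sinh ha.le (div_nonneg ha' hω.le)
        (mul_nonneg hω.le (sub_nonneg.2 ht))
    _ ≤ f t := mul_cosh_add_mul_sinh_le_of_sq_mul_le_deriv2 hω.ne' hf hf' h ht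

end DifferentialInequalities

section WidthEquation

noncomputable def widthForce (lam ω x : ℝ) : ℝ := 2 * lam / x + 1 / x ^ 3 + ω ^ 2 * x

theorem exists_pos_forall_le_widthForce {lam ω x₀ : ℝ} (hlω : lam ^ 2 < ω ^ 2) (hx₀ : 0 < x₀) :
    ∃ c > 0, ∀ x, 0 < x → x ≤ x₀ → c ≤ widthForce lam ω x := by
  have hω : 0 < ω ^ 2 := (sq_nonneg lam).trans_lt hlω
  have hmin : 0 < 1 - lam ^ 2 / ω ^ 2 := sub_pos.2 ((div_lt_one hω).2 hlω)
  refine ⟨(1 - lam ^ 2 / ω ^ 2) / x₀ ^ 3, by positivity, fun x hx hxx₀ => ?_⟩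
  -- ω²(ω²x⁴ + 2λx² + 1) = (ω²x² + λ)² + ω² - λ²
  have hpoly : 1 - lam ^ 2 / ω ^ 2 ≤ ω ^ 2 * x ^ 4 + 2 * lam * x ^ 2 + 1 := by
    rw [one_sub_div hω.ne', div_le_iff₀ hω]
    nlinarith [sq_nonneg (ω ^ 2 * x ^ 2 + lam)]
  have hforce : widthForce lam ω x = (ω ^ 2 * x ^ 4 + 2 * lam * x ^ 2 + 1) / x ^ 3 := by
    unfold widthForce
    field_simp
    ring
  calc (1 - lam ^ 2 / ω ^ 2) / x₀ ^ 3 ≤ (1 - lam ^ 2 / ω ^ 2) / x ^ 3 := by gcongr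
    _ ≤ widthForce lam ω x := by rw [hforce]; gcongr

theorem widthForce_pos {lam ω x : ℝ} (hlω : lam ^ 2 < ω ^ 2) (hx : 0 < x) :
    0 < widthForce lam ω x := by
  obtain ⟨c, hc, hle⟩ := exists_pos_forall_le_widthForce hlω hx
  exact hc.trans_le (hle x hx le_rfl)

theorem widthForce_le_sq_mul {lam ω x : ℝ} (hx : 1 ≤ x) (hlx : 1 ≤ -(2 * lam) * x) :
    widthForce lam ω x ≤ ω ^ 2 * x := by
  have h : 2 * lam / x + 1 / x ^ 3 = (2 * lam * x ^ 2 + 1) / x ^ 3 := by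
    field_simp
  have hnum : 2 * lam * x ^ 2 + 1 ≤ 0 := by nlinarith
  unfold widthForce
  rw [h]
  linarith [div_nonpos_of_nonpos_of_nonneg hnum (by positivity : (0 : ℝ) ≤ x ^ 3)]

theorem sq_mul_add_le_widthForce {lam ω x : ℝ} (hlam : lam ≤ 0) (hx : 1 ≤ x) :
    ω ^ 2 * x + 2 * lam ≤ widthForce lam ω x := by
  have h : 2 * lam ≤ 2 * lam / x := by
    rw [le_div_iff₀ (by linarith)]
    nlinarith
  unfold widthForce
  linarith [one_div_pos.2 (pow_pos (by linarith : (0 : ℝ) < x) 3)]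

theorem exists_deriv_pos_of_deriv2_eq_widthForce {lam ω : ℝ} {τ τ' τ'' : ℝ → ℝ}
    (hlω : lam ^ 2 < ω ^ 2) (hd1 : ∀ t, 0 ≤ t → HasDerivAt τ (τ' t) t)
    (hd2 : ∀ t, 0 ≤ t → HasDerivAt τ' (τ'' t) t) (hpos : ∀ t, 0 ≤ t → 0 < τ t)
    (hode : ∀ t, 0 ≤ t → τ'' t = widthForce lam ω (τ t)) : ∃ t₀, 0 ≤ t₀ ∧ 0 < τ' t₀ := by
  by_contra! hτ'
  have hτ_le : ∀ t, 0 ≤ t → τ t ≤ τ 0 := fun t ht => by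
    have := add_mul_sub_le_of_hasDerivAt_ge (f := fun s => -τ s) (c := 0)
      (fun s hs => (hd1 s hs).neg) (fun s hs => by linarith [hτ' s hs]) ht
    linarith
  obtain ⟨c, hc, hle⟩ := exists_pos_forall_le_widthForce hlω (hpos 0 le_rfl)
  have htend : Tendsto τ' atTop atTop := tendsto_atTop_of_hasDerivAt_ge hc hd2 fun t ht =>
    (hode t ht).symm ▸ hle (τ t) (hpos t ht) (hτ_le t ht)
  obtain ⟨t, ht, ht0⟩ := ((htend.eventually_gt_atTop 0).and (eventually_ge_atTop 0)).exists
  exact (hτ' t ht0).not_gt ht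

theorem exists_forall_le_deriv_of_deriv2_eq_widthForce {lam ω : ℝ} {τ τ' τ'' : ℝ → ℝ}
    (hlω : lam ^ 2 < ω ^ 2) (hd1 : ∀ t, 0 ≤ t → HasDerivAt τ (τ' t) t)
    (hd2 : ∀ t, 0 ≤ t → HasDerivAt τ' (τ'' t) t) (hpos : ∀ t, 0 ≤ t → 0 < τ t)
    (hode : ∀ t, 0 ≤ t → τ'' t = widthForce lam ω (τ t)) :
    ∃ t₀ ≥ (0 : ℝ), ∃ p > (0 : ℝ), ∀ t, t₀ ≤ t → p ≤ τ' t := by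
  obtain ⟨t₀, ht₀, hp⟩ := exists_deriv_pos_of_deriv2_eq_widthForce hlω hd1 hd2 hpos hode
  have hmono : MonotoneOn τ' (Ici 0) := monotoneOn_Ici_of_hasDerivAt_nonneg hd2 fun t ht =>
    (hode t ht).symm ▸ (widthForce_pos hlω (hpos t ht)).le
  exact ⟨t₀, ht₀, τ' t₀, hp, fun t ht => hmono ht₀ (ht₀.trans ht) ht⟩

end WidthEquation

/-- For `ω > −λ > 0`, every positive twice differentiable solution of
`τ″ = 2λ/τ + 1/τ³ + ω²τ` on `[0,∞)` tends to `+∞`, and grows exactly like `e^{ωt}`: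
there are `C₁, C₂ > 0` and `T ≥ 0` with `C₁e^{ωt} ≤ τ(t) ≤ C₂e^{ωt}` for `t ≥ T`.
Consequently every Gaussian solution disperses exponentially fast. -/
theorem ode_exponential_growth
    (lam ω : ℝ) (hlam : lam < 0) (hlo : -lam < ω)
    (τ τ' τ'' : ℝ → ℝ)
    (hd1 : ∀ t, 0 ≤ t → HasDerivAt τ (τ' t) t)
    (hd2 : ∀ t, 0 ≤ t → HasDerivAt τ' (τ'' t) t)
    (hpos : ∀ t, 0 ≤ t → 0 < τ t)
    (hode : ∀ t, 0 ≤ t → τ'' t = 2 * lam / τ t + 1 / (τ t) ^ 3 + ω ^ 2 * τ t) :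
    Filter.Tendsto τ Filter.atTop Filter.atTop ∧
    ∃ C₁ > (0 : ℝ), ∃ C₂ > (0 : ℝ), ∃ T ≥ (0 : ℝ), ∀ t, T ≤ t →
      C₁ * Real.exp (ω * t) ≤ τ t ∧ τ t ≤ C₂ * Real.exp (ω * t) := by
  have hω : 0 < ω := by linarith
  have hlω : lam ^ 2 < ω ^ 2 := by nlinarith
  obtain ⟨t₀, ht₀, p, hp, hτ'⟩ :=
    exists_forall_le_deriv_of_deriv2_eq_widthForce hlω hd1 hd2 hpos hode
  have htend : Tendsto τ atTop atTop :=
    tendsto_atTop_of_hasDerivAt_ge hp (fun t ht => hd1 t (ht₀.trans ht)) hτ'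
  have hshift : 2 * lam / ω ^ 2 < 0 := div_neg_of_neg_of_pos (by linarith) (by positivity)
  obtain ⟨T, hT⟩ := eventually_atTop.1 <| (htend.eventually_ge_atTop 1).and <|
    ((htend.const_mul_atTop (by linarith : 0 < -(2 * lam))).eventually_ge_atTop 1).and <|
    (htend.eventually_gt_atTop (-(2 * lam / ω ^ 2))).and (eventually_ge_atTop t₀)
  obtain ⟨-, -, hτT, hT₀⟩ := hT T le_rfl
  have hT0 : 0 ≤ T := ht₀.trans hT₀
  have hd1T : ∀ t, T ≤ t → HasDerivAt τ (τ' t) t := fun t ht => hd1 t (hT0.trans ht)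
  have hd2T : ∀ t, T ≤ t → HasDerivAt τ' (τ'' t) t := fun t ht => hd2 t (hT0.trans ht)
  have hτ'T : 0 ≤ τ' T := hp.le.trans (hτ' T hT₀)
  obtain ⟨C₂, hC₂, hupper⟩ := exists_le_mul_exp_of_deriv2_le hω hd1T hd2T (fun t ht =>
    (hode t (hT0.trans ht)).trans_le (widthForce_le_sq_mul (hT t ht).1 (hT t ht).2.1))
    (hpos T hT0) hτ'T
  obtain ⟨C₁, hC₁, hlower⟩ := exists_mul_exp_le_of_sq_mul_le_deriv2
    (f := fun t => τ t + 2 * lam / ω ^ 2) hω (fun t ht => (hd1T t ht).add_const _) hd2T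
    (fun t ht => by
      rw [hode t (hT0.trans ht), mul_add, mul_div_cancel₀ _ (by positivity)]
      exact sq_mul_add_le_widthForce hlam.le (hT t ht).1)
    (by linarith) hτ'T
  exact ⟨htend, C₁, hC₁, C₂, hC₂, T, hT0, fun t ht =>
    ⟨(hlower t ht).trans (by linarith), hupper t ht⟩⟩
end

section
/- Let d ≥ 1, let φ : ℝ^d → ℝ be nonnegative with φ ∈ L²(ℝ^d), let α : ℝ^d → ℝ be measurable, and let a ∈ ℝ^d. Then for every θ ∈ ℝ, ‖φ(·−a) e^{iα(·)} − e^{iθ} φ‖²_{L²(ℝ^d)} ≥ ‖φ(·−a) − φ‖²_{L²(ℝ^d)}. Consequently inf_{θ∈ℝ} ‖φ(·−a)e^{iα(·)} − e^{iθ}φ‖_{L²} ≥ ‖φ(·−a) − φ‖_{L²}. -/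
/-!
Since `φ ≥ 0`, the two functions `φ(· - a) e^{iα}` and `e^{iθ} φ` have moduli `φ(· - a)` and `φ`.
The pointwise reverse triangle inequality `|‖z‖ - ‖w‖| ≤ ‖z - w‖`, squared and integrated,
therefore bounds the `L²` distance between them from below by `‖φ(· - a) - φ‖_{L²}`.
-/

open MeasureTheory

theorem sq_norm_sub_norm_le_sq_norm_sub {E : Type*} [SeminormedAddCommGroup E] (z w : E) :
    (‖z‖ - ‖w‖) ^ 2 ≤ ‖z - w‖ ^ 2 := by
  rw [← sq_abs]
  exact pow_le_pow_left₀ (abs_nonneg _) (abs_norm_sub_norm_le z w) 2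

theorem integral_sq_norm_sub_norm_le {α E : Type*} [MeasurableSpace α] {μ : Measure α}
    [NormedAddCommGroup E] {f g : α → E} (hf : MemLp f 2 μ) (hg : MemLp g 2 μ) :
    ∫ x, (‖f x‖ - ‖g x‖) ^ 2 ∂μ ≤ ∫ x, ‖f x - g x‖ ^ 2 ∂μ :=
  integral_mono (hf.norm.sub hg.norm).integrable_sq (hf.sub hg).norm.integrable_sq
    fun x => sq_norm_sub_norm_le_sq_norm_sub (f x) (g x)

theorem MeasureTheory.MemLp.ofReal_mul_exp_I_mul {α : Type*} [MeasurableSpace α] {μ : Measure α}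
    {p : ENNReal} {f : α → ℝ} (hf : MemLp f p μ) {β : α → ℝ} (hβ : Measurable β) :
    MemLp (fun x => (f x : ℂ) * Complex.exp (Complex.I * β x)) p μ := by
  refine hf.of_le ?_ (Filter.Eventually.of_forall fun x => ?_)
  · exact (Complex.continuous_ofReal.comp_aestronglyMeasurable hf.1).mul
      (by fun_prop : Measurable fun x => Complex.exp (Complex.I * β x)).aestronglyMeasurable
  · simp [Complex.norm_exp]

theorem modulated_translate_L2_lower_bound_general
    (d : ℕ) (φ : EuclideanSpace ℝ (Fin d) → ℝ)
    (hnn : ∀ x, 0 ≤ φ x) (hL2 : MemLp φ 2 volume)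
    (α : EuclideanSpace ℝ (Fin d) → ℝ) (hα : Measurable α)
    (a : EuclideanSpace ℝ (Fin d)) :
    (∀ θ : ℝ,
      (∫ x, ‖((φ (x - a) : ℝ) : ℂ) * Complex.exp (Complex.I * (α x : ℂ))
          - Complex.exp (Complex.I * (θ : ℂ)) * ((φ x : ℝ) : ℂ)‖ ^ 2)
        ≥ ∫ x, (φ (x - a) - φ x) ^ 2)
    ∧ (⨅ θ : ℝ, Real.sqrt
        (∫ x, ‖((φ (x - a) : ℝ) : ℂ) * Complex.exp (Complex.I * (α x : ℂ))
          - Complex.exp (Complex.I * (θ : ℂ)) * ((φ x : ℝ) : ℂ)‖ ^ 2))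
        ≥ Real.sqrt (∫ x, (φ (x - a) - φ x) ^ 2) := by
  have htranslate : MemLp (fun x => φ (x - a)) 2 volume :=
    hL2.comp_measurePreserving (measurePreserving_sub_right volume a)
  have hmain (θ : ℝ) :
      ∫ x, (φ (x - a) - φ x) ^ 2 ≤
        ∫ x, ‖((φ (x - a) : ℝ) : ℂ) * Complex.exp (Complex.I * (α x : ℂ))
          - Complex.exp (Complex.I * (θ : ℂ)) * ((φ x : ℝ) : ℂ)‖ ^ 2 := by
    have horbit : MemLp (fun x => Complex.exp (Complex.I * θ) * (φ x : ℂ)) 2 volume :=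
      hL2.ofReal.const_mul _
    refine le_of_eq_of_le (integral_congr_ae (Filter.Eventually.of_forall fun x => ?_))
      (integral_sq_norm_sub_norm_le (htranslate.ofReal_mul_exp_I_mul hα) horbit)
    simp [Complex.norm_exp, abs_of_nonneg (hnn _)]
  exact ⟨hmain, le_ciInf fun θ => Real.sqrt_le_sqrt (hmain θ)⟩

/-- Key instability estimate: for a nonnegative `L²` profile `φ` on `ℝ^d`, a measurable
phase `α` and a translation `a`, the modulated translate `φ(·−a)e^{iα(·)}` is at least as
far in `L²` from every point `e^{iθ}φ` of the phase orbit of `φ` as the unmodulated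
translate `φ(·−a)` is from `φ`; consequently the same holds for the infimum over `θ`. -/
theorem modulated_translate_L2_lower_bound
    (d : ℕ) (hd : 1 ≤ d) (φ : EuclideanSpace ℝ (Fin d) → ℝ)
    (hnn : ∀ x, 0 ≤ φ x) (hL2 : MemLp φ 2 volume)
    (α : EuclideanSpace ℝ (Fin d) → ℝ) (hα : Measurable α)
    (a : EuclideanSpace ℝ (Fin d)) :
    (∀ θ : ℝ,
      (∫ x, ‖((φ (x - a) : ℝ) : ℂ) * Complex.exp (Complex.I * (α x : ℂ))
          - Complex.exp (Complex.I * (θ : ℂ)) * ((φ x : ℝ) : ℂ)‖ ^ 2)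
        ≥ ∫ x, (φ (x - a) - φ x) ^ 2)
    ∧ (⨅ θ : ℝ, Real.sqrt
        (∫ x, ‖((φ (x - a) : ℝ) : ℂ) * Complex.exp (Complex.I * (α x : ℂ))
          - Complex.exp (Complex.I * (θ : ℂ)) * ((φ x : ℝ) : ℂ)‖ ^ 2))
        ≥ Real.sqrt (∫ x, (φ (x - a) - φ x) ^ 2) :=
  modulated_translate_L2_lower_bound_general d φ hnn hL2 α hα a
end
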